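/- (Fixed Share with switching costs.) Let N ≥ 2, T ≥ 1, D ≥ 1, τ ≥ 1, and set η = √(ln(N·τ)/(D·τ)). Let l₁, …, l_T ∈ [0,1]^N be any loss sequence, and define z₁, …, z_T ∈ Δ(N) by z₁ = (1/N, …, 1/N) and, if τ ≥ 16·D·ln(N·τ), by z_{t+1}(i) = (z_t(i)·e^{−η·l_t(i)} + 1/(N·τ)) / Σ_{j=1}^N (z_t(j)·e^{−η·l_t(j)} + 1/(N·τ)), while if τ < 16·D·ln(N·τ) set z_{t+1} = z_t. Then for every interval I = {t₀+1, …, t₀+k} ⊆ {1, …, T} with k ≤ τ and every i ∈ {1, …, N}: Σ_{t∈I} ⟨l_t, z_t⟩ + D·Σ_{t=t₀+2}^{t₀+k} ‖z_t − z_{t−1}‖ ≤ Σ_{t∈I} l_t(i) + √(16·D·τ·ln(N·τ)). -/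

import Mathlib

/-- Total-variation distance between two points of the simplex,
    ‖z − z′‖ = (1/2)·Σᵢ |zᵢ − z′ᵢ|. -/
noncomputable def tv {N : ℕ} (z z' : Fin N → ℝ) : ℝ := (1/2) * ∑ i, |z i - z' i|

lemma exp_neg_le_quad {x : ℝ} (hx : 0 ≤ x) : Real.exp (-x) ≤ 1 - x + x^2 := by
  have h1 := Real.add_one_le_exp x
  have h2 : Real.exp (-x) * Real.exp x = 1 := by rw [← Real.exp_add]; simp
  have h3 := (Real.exp_pos (-x)).le
  nlinarith [mul_nonneg h3 (sub_nonneg.mpr h1), mul_nonneg (mul_nonneg hx hx) hx]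

set_option maxHeartbeats 1000000 in
open Finset in
lemma step_facts {N : ℕ} (hN : 2 ≤ N) (τ η : ℝ) (hτ : 1 ≤ τ) (hη0 : 0 ≤ η)
    (lt zt zt1 : Fin N → ℝ) (hl : ∀ i, lt i ∈ Set.Icc (0:ℝ) 1)
    (hsum : ∑ j, zt j = 1) (hpos : ∀ i, 0 < zt i)
    (hrec : ∀ i, zt1 i =
      (zt i * Real.exp (-η * lt i) + 1/(N*τ)) /
        ∑ j, (zt j * Real.exp (-η * lt j) + 1/(N*τ))) :
    (∑ j, zt1 j = 1) ∧ (∀ i, 1/(2*(N*τ)) ≤ zt1 i) ∧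
    (∀ i, η * (∑ j, lt j * zt j) - η * lt i ≤
        Real.log (zt1 i) - Real.log (zt i) + η^2 + Real.exp η / τ) ∧
    tv zt1 zt ≤ Real.exp η * (η/2 + 1/τ) := by
  have hτ0 : 0 < τ := lt_of_lt_of_le one_pos hτ
  have hN0 : (0:ℝ) < N := by exact_mod_cast (by omega : 0 < N)
  have hc0 : 0 < 1/((N:ℝ)*τ) := by positivity
  set c : ℝ := 1/((N:ℝ)*τ) with hcdef
  set Φ : ℝ := ∑ j, zt j * Real.exp (-η * lt j) with hPhidef
  have hE1 : ∀ j, Real.exp (-η * lt j) ≤ 1 := fun j => Real.exp_le_one_iff.mpr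
    (by nlinarith [(hl j).1, (hl j).2])
  have hE2 : ∀ j, Real.exp (-η) ≤ Real.exp (-η * lt j) := fun j =>
    Real.exp_le_exp.mpr (by nlinarith [(hl j).1, (hl j).2])
  have hΦ1 : Φ ≤ 1 := by
    calc Φ ≤ ∑ j, zt j := sum_le_sum fun j _ =>
            mul_le_of_le_one_right (hpos j).le (hE1 j)
    _ = 1 := hsum
  have hΦlb : Real.exp (-η) ≤ Φ := by
    calc Real.exp (-η) = ∑ j, zt j * Real.exp (-η) := by rw [← Finset.sum_mul, hsum, one_mul]
    _ ≤ Φ := sum_le_sum fun j _ => mul_le_mul_of_nonneg_left (hE2 j) (hpos j).le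
  have hΦ0 : 0 < Φ := lt_of_lt_of_le (Real.exp_pos _) hΦlb
  have hexpinv : Real.exp η * Real.exp (-η) = 1 := by rw [← Real.exp_add]; simp
  have hΦexp : 1 ≤ Φ * Real.exp η := by nlinarith [Real.exp_pos η]
  have hDen : ∑ j, (zt j * Real.exp (-η * lt j) + c) = Φ + 1/τ := by
    rw [Finset.sum_add_distrib, Finset.sum_const, Finset.card_univ, Fintype.card_fin,
      nsmul_eq_mul, hcdef]
    have : (N:ℝ) * (1/((N:ℝ)*τ)) = 1/τ := by field_simp
    rw [this]
  have hW0 : 0 < Φ + 1/τ := by positivity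
  have hWle2 : Φ + 1/τ ≤ 2 := by
    have : 1/τ ≤ 1 := by rw [div_le_one hτ0]; exact hτ
    linarith
  have hz1' : ∀ i, zt1 i = (zt i * Real.exp (-η * lt i) + c) / (Φ + 1/τ) := by
    intro i; rw [hrec i, hDen]
  refine ⟨?_, ?_, ?_, ?_⟩
  · rw [show (∑ j, zt1 j) = ∑ j, (zt j * Real.exp (-η * lt j) + c) / (Φ + 1/τ) from
      Finset.sum_congr rfl fun j _ => hz1' j, ← Finset.sum_div, hDen, div_self hW0.ne']
  · intro i
    rw [hz1' i]
    have h1 : c / 2 ≤ c / (Φ + 1/τ) := by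
      apply div_le_div_of_nonneg_left hc0.le hW0 hWle2
    have h2 : c / (Φ + 1/τ) ≤ (zt i * Real.exp (-η * lt i) + c) / (Φ + 1/τ) := by
      gcongr
      nlinarith [mul_pos (hpos i) (Real.exp_pos (-η * lt i))]
    have h3 : 1/(2*((N:ℝ)*τ)) = c/2 := by rw [hcdef]; ring
    linarith
  · intro i
    have hnum0 : 0 < zt i * Real.exp (-η * lt i) := mul_pos (hpos i) (Real.exp_pos _)
    have h1 : zt i * Real.exp (-η * lt i) / (Φ + 1/τ) ≤ zt1 i := by
      rw [hz1' i]; gcongr; linarith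
    have h2 : Real.log (zt i * Real.exp (-η * lt i) / (Φ + 1/τ)) ≤ Real.log (zt1 i) :=
      Real.log_le_log (by positivity) h1
    have h3 : Real.log (zt i * Real.exp (-η * lt i) / (Φ + 1/τ)) =
        Real.log (zt i) + (-η * lt i) - Real.log (Φ + 1/τ) := by
      rw [Real.log_div (by positivity) hW0.ne', Real.log_mul (hpos i).ne' (Real.exp_pos _).ne',
        Real.log_exp]
    -- bound log (Φ + 1/τ)
    have hWΦ : Φ + 1/τ ≤ Φ * (1 + Real.exp η / τ) := by
      have h4 : 1/τ ≤ Φ * Real.exp η / τ := by gcongr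
      have h4' : Φ * (1 + Real.exp η / τ) = Φ + Φ * Real.exp η / τ := by ring
      linarith
    have hlogW : Real.log (Φ + 1/τ) ≤ Real.log Φ + Real.exp η / τ := by
      calc Real.log (Φ + 1/τ) ≤ Real.log (Φ * (1 + Real.exp η / τ)) :=
            Real.log_le_log hW0 hWΦ
      _ = Real.log Φ + Real.log (1 + Real.exp η / τ) := by
            rw [Real.log_mul hΦ0.ne' (by positivity)]
      _ ≤ Real.log Φ + Real.exp η / τ := by
            have := Real.log_le_sub_one_of_pos (show (0:ℝ) < 1 + Real.exp η / τ by positivity)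
            linarith
    -- bound log Φ
    set Q : ℝ := ∑ j, lt j * zt j with hQdef
    have hΦquad : Φ ≤ 1 - η * Q + η^2 := by
      have h5 : Φ ≤ ∑ j, (zt j - η * (lt j * zt j) + η^2 * ((lt j)^2 * zt j)) := by
        apply sum_le_sum
        intro j _
        have hq := exp_neg_le_quad (mul_nonneg hη0 (hl j).1)
        have h6 : zt j * Real.exp (-(η * lt j)) ≤ zt j * (1 - η * lt j + (η * lt j)^2) :=
          mul_le_mul_of_nonneg_left hq (hpos j).le
        rw [neg_mul]
        calc zt j * Real.exp (-(η * lt j)) ≤ zt j * (1 - η * lt j + (η * lt j)^2) := h6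
        _ = zt j - η * (lt j * zt j) + η^2 * ((lt j)^2 * zt j) := by ring
      have h7 : ∑ j, (zt j - η * (lt j * zt j) + η^2 * ((lt j)^2 * zt j))
          = 1 - η * Q + η^2 * ∑ j, (lt j)^2 * zt j := by
        rw [Finset.sum_add_distrib, Finset.sum_sub_distrib, ← Finset.mul_sum, ← Finset.mul_sum,
          hsum, hQdef]
      have h8 : ∑ j, (lt j)^2 * zt j ≤ 1 := by
        calc ∑ j, (lt j)^2 * zt j ≤ ∑ j, zt j := by
              apply sum_le_sum
              intro j _
              calc (lt j)^2 * zt j ≤ 1 * zt j :=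
                    mul_le_mul_of_nonneg_right (by nlinarith [(hl j).1, (hl j).2]) (hpos j).le
              _ = zt j := one_mul _
        _ = 1 := hsum
      have h9 := mul_le_mul_of_nonneg_left h8 (sq_nonneg η)
      linarith
    have hΦquad0 : 0 < 1 - η * Q + η^2 := lt_of_lt_of_le hΦ0 hΦquad
    have hlogΦ : Real.log Φ ≤ -(η * Q) + η^2 := by
      calc Real.log Φ ≤ Real.log (1 - η * Q + η^2) := Real.log_le_log hΦ0 hΦquad
      _ ≤ (1 - η * Q + η^2) - 1 := Real.log_le_sub_one_of_pos hΦquad0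
      _ = -(η * Q) + η^2 := by ring
    linarith [h2, h3.symm.le, hlogW, hlogΦ]
  · -- tv bound
    have key : ∀ i, |zt1 i - zt i| ≤ (zt i * (η + 1/τ) + c) * Real.exp η := by
      intro i
      have hEi1 : Real.exp (-η * lt i) ≤ 1 := hE1 i
      have hEi2 : Real.exp (-η) ≤ Real.exp (-η * lt i) := hE2 i
      have honeexp : 1 - Real.exp (-η) ≤ η := by
        have := Real.add_one_le_exp (-η); linarith
      have habs : |Real.exp (-η * lt i) - (Φ + 1/τ)| ≤ η + 1/τ := by
        have ht' : (0:ℝ) < 1/τ := one_div_pos.mpr hτ0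
        rw [abs_le]
        constructor <;> linarith
      have hform : zt1 i - zt i =
          (zt i * (Real.exp (-η * lt i) - (Φ + 1/τ)) + c) / (Φ + 1/τ) := by
        rw [hz1' i]; field_simp; ring
      rw [hform, abs_div, abs_of_pos hW0]
      have h9 : |zt i * (Real.exp (-η * lt i) - (Φ + 1/τ)) + c| ≤ zt i * (η + 1/τ) + c := by
        calc |zt i * (Real.exp (-η * lt i) - (Φ + 1/τ)) + c|
            ≤ |zt i * (Real.exp (-η * lt i) - (Φ + 1/τ))| + |c| := abs_add_le _ _
        _ = zt i * |Real.exp (-η * lt i) - (Φ + 1/τ)| + c := by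
              rw [abs_mul, abs_of_pos (hpos i), abs_of_pos hc0]
        _ ≤ zt i * (η + 1/τ) + c := by
              have := mul_le_mul_of_nonneg_left habs (hpos i).le; linarith
      have h10 : 1 / (Φ + 1/τ) ≤ Real.exp η := by
        rw [div_le_iff₀ hW0]
        nlinarith [hΦexp, mul_pos (Real.exp_pos η) (one_div_pos.mpr hτ0)]
      calc |zt i * (Real.exp (-η * lt i) - (Φ + 1/τ)) + c| / (Φ + 1/τ)
          ≤ (zt i * (η + 1/τ) + c) / (Φ + 1/τ) := by gcongr
      _ = (zt i * (η + 1/τ) + c) * (1 / (Φ + 1/τ)) := by ring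
      _ ≤ (zt i * (η + 1/τ) + c) * Real.exp η := by
            apply mul_le_mul_of_nonneg_left h10
            have hX : 0 ≤ η + 1/τ := add_nonneg hη0 (one_div_pos.mpr hτ0).le
            nlinarith [(hpos i).le, hc0.le]
    have hsum2 : ∑ i, |zt1 i - zt i| ≤ (η + 2/τ) * Real.exp η := by
      calc ∑ i, |zt1 i - zt i| ≤ ∑ i, (zt i * (η + 1/τ) + c) * Real.exp η :=
            sum_le_sum fun i _ => key i
      _ = ((η + 1/τ) * 1 + N * c) * Real.exp η := by
            rw [← Finset.sum_mul]
            congr 1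
            rw [Finset.sum_add_distrib, ← Finset.sum_mul, hsum, Finset.sum_const,
              Finset.card_univ, Fintype.card_fin, nsmul_eq_mul]
            ring
      _ = (η + 2/τ) * Real.exp η := by
            rw [hcdef]
            have : (N:ℝ) * (1/((N:ℝ)*τ)) = 1/τ := by field_simp
            rw [this]; ring
    show (1/2) * (∑ i, |zt1 i - zt i|) ≤ Real.exp η * (η/2 + 1/τ)
    calc (1/2) * (∑ i, |zt1 i - zt i|) ≤ (1/2) * ((η + 2/τ) * Real.exp η) := by linarith
    _ = Real.exp η * (η/2 + 1/τ) := by ring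



set_option maxHeartbeats 2000000 in
lemma final_numeric (D τ η L R Sw k E c2 : ℝ)
    (hD : 1 ≤ D) (hτ : 1 ≤ τ) (hη0 : 0 < η) (hL3 : 3 ≤ L)
    (hη2 : η^2 * (D*τ) = L) (hk1 : 1 ≤ k) (hkτ : k ≤ τ)
    (hE0 : 0 < E) (hE13 : E ≤ 1.3) (hτη12 : 12 ≤ τ*η)
    (hc20 : 0 ≤ c2) (hc27 : c2 ≤ 0.7)
    (hR : η * R ≤ c2 + L + k*(η^2 + E/τ))
    (hSwB : Sw ≤ k * (E*(η/2 + 1/τ)))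
    (hSw0 : 0 ≤ Sw) :
    R + D * Sw ≤ 4*(D*τ*η) := by
  have hτ0 : (0:ℝ) < τ := by linarith
  have hD0 : (0:ℝ) < D := by linarith
  have hkE : k*E ≤ 1.3*τ := by
    nlinarith [mul_le_mul_of_nonneg_right hkτ hE0.le, mul_le_mul_of_nonneg_left hE13 hτ0.le]
  have hA : k*E/τ ≤ 1.3 := by rw [div_le_iff₀ hτ0]; linarith
  have hkη2 : k*η^2 ≤ τ*η^2 := by nlinarith [sq_nonneg η]
  have e1 : η * R ≤ 0.7 + L + τ*η^2 + 1.3 := by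
    have hx : k*(η^2 + E/τ) = k*η^2 + k*E/τ := by ring
    linarith
  have hsplit : k*(E*(η/2 + 1/τ)) = k*E*(η/2) + k*E/τ := by ring
  have hB : k*E*(η/2) ≤ (13/20)*(τ*η) := by
    nlinarith [mul_nonneg (by linarith : (0:ℝ) ≤ 1.3*τ - k*E) hη0.le]
  have e2 : Sw ≤ (13/20)*(τ*η) + 1.3 := by linarith
  have hDη0 : (0:ℝ) ≤ D*η := by positivity
  have e3 : D*η*Sw ≤ (13/20)*(D*τ*η^2) + 1.3*(D*η) := by
    nlinarith [mul_le_mul_of_nonneg_left e2 hDη0]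
  have e4 : D*τ*η^2 = L := by linear_combination hη2
  have e5 : D*η*(1.3) ≤ (13/120)*L := by
    nlinarith [e4, mul_nonneg (by linarith : (0:ℝ) ≤ τ*η - 12) hDη0]
  have e6 : τ*η^2 ≤ L := by
    nlinarith [e4, mul_nonneg (by linarith : (0:ℝ) ≤ D - 1)
      (mul_nonneg hτ0.le (sq_nonneg η))]
  have final : η*(R + D*Sw) ≤ η*(4*(D*τ*η)) := by
    nlinarith [e1, e3, e4, e5, e6, hL3]
  exact le_of_mul_le_mul_left final hη0

open Finset in
set_option maxHeartbeats 2000000 in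
/-- Fixed Share with switching costs: regret bound on every interval of length ≤ τ. -/
theorem stmt_12 (N T : ℕ) (hN : 2 ≤ N) (hT : 1 ≤ T) (D τ : ℝ)
    (hD : 1 ≤ D) (hτ : 1 ≤ τ)
    (η : ℝ) (hη : η = Real.sqrt (Real.log (N * τ) / (D * τ)))
    (l : ℕ → Fin N → ℝ) (hl : ∀ t i, l t i ∈ Set.Icc (0:ℝ) 1)
    (z : ℕ → Fin N → ℝ)
    (hz1 : ∀ i, z 1 i = 1 / N)
    (hzrec : ∀ t, 1 ≤ t → ∀ i, z (t+1) i =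
      if 16 * D * Real.log (N * τ) ≤ τ then
        (z t i * Real.exp (-η * l t i) + 1/(N*τ)) /
          ∑ j, (z t j * Real.exp (-η * l t j) + 1/(N*τ))
      else z t i) :
    ∀ t₀ k : ℕ, 1 ≤ k → t₀ + k ≤ T → (k : ℝ) ≤ τ →
      ∀ i : Fin N,
        (∑ t ∈ Finset.Icc (t₀+1) (t₀+k), ∑ j, l t j * z t j)
            + D * ∑ t ∈ Finset.Icc (t₀+2) (t₀+k), tv (z t) (z (t-1))
          ≤ (∑ t ∈ Finset.Icc (t₀+1) (t₀+k), l t i)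
              + Real.sqrt (16 * D * τ * Real.log (N * τ)) := by
  intro t₀ k hk1 hkT hkτ i
  have hτ0 : (0:ℝ) < τ := by linarith
  have hD0 : (0:ℝ) < D := by linarith
  have hN2 : (2:ℝ) ≤ (N:ℝ) := by exact_mod_cast hN
  have hN0 : (0:ℝ) < N := by linarith
  have hNτ2 : (2:ℝ) ≤ (N:ℝ) * τ := by nlinarith
  have hNτ0 : (0:ℝ) < (N:ℝ) * τ := by linarith
  have hlog2pos : (0:ℝ) < Real.log 2 := by have := Real.log_two_gt_d9; linarith
  have hL2 : Real.log 2 ≤ Real.log ((N:ℝ)*τ) := Real.log_le_log two_pos hNτ2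
  set L := Real.log ((N:ℝ)*τ) with hLdef
  have hL0 : 0 < L := lt_of_lt_of_le hlog2pos hL2
  have hη0 : 0 < η := by rw [hη]; exact Real.sqrt_pos.mpr (by positivity)
  have hη2 : η^2 * (D*τ) = L := by
    rw [hη, Real.sq_sqrt (by positivity)]
    field_simp
  -- simplex invariant
  have hinv : ∀ t, 1 ≤ t → (∑ j, z t j = 1) ∧ (∀ j, 1/(2*((N:ℝ)*τ)) ≤ z t j) := by
    intro t ht
    induction t, ht using Nat.le_induction with
    | base =>
      constructor
      · rw [Finset.sum_congr rfl fun j _ => hz1 j, Finset.sum_const, Finset.card_univ,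
          Fintype.card_fin, nsmul_eq_mul]
        field_simp
      · intro j
        rw [hz1 j, div_le_div_iff₀ (by positivity) hN0]
        nlinarith
    | succ t ht IH =>
      by_cases hc : 16 * D * L ≤ τ
      · have hpos : ∀ j, 0 < z t j := fun j => lt_of_lt_of_le (by positivity) (IH.2 j)
        have hsf := step_facts hN τ η hτ hη0.le (l t) (z t) (z (t+1)) (hl t) IH.1 hpos
          (fun j => by rw [hzrec t ht j, if_pos hc])
        exact ⟨hsf.1, hsf.2.1⟩
      · have hzeq : ∀ j, z (t+1) j = z t j := fun j => by rw [hzrec t ht j, if_neg hc]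
        constructor
        · rw [Finset.sum_congr rfl fun j _ => hzeq j]; exact IH.1
        · intro j; rw [hzeq j]; exact IH.2 j
  have hsqrt : Real.sqrt (16 * D * τ * L) = 4*(D*τ*η) := by
    have h1 : 16 * D * τ * L = (4*(D*τ*η))^2 := by
      linear_combination (-(16*D*τ)) * hη2
    rw [h1, Real.sqrt_sq (by positivity)]
  by_cases hcase : 16 * D * L ≤ τ
  case neg =>
    -- easy case : z is constant, and τ < 16 D L
    have hconst : ∀ t j, 2 ≤ t → z t j = z (t-1) j := by
      intro t j ht
      have h1 : t - 1 + 1 = t := by omega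
      conv_lhs => rw [← h1]
      rw [hzrec (t-1) (by omega) j, if_neg hcase]
    have hSw0 : ∑ t ∈ Finset.Icc (t₀+2) (t₀+k), tv (z t) (z (t-1)) = 0 := by
      apply Finset.sum_eq_zero
      intro t htm
      have ht2 : t₀ + 2 ≤ t := (Finset.mem_Icc.mp htm).1
      have hzeq : ∀ j, z t j = z (t-1) j := fun j => hconst t j (by omega)
      simp [tv, hzeq]
    have hub : ∑ t ∈ Finset.Icc (t₀+1) (t₀+k), ∑ j, l t j * z t j ≤ (k:ℝ) := by
      have hcard : (Finset.Icc (t₀+1) (t₀+k)).card = k := by rw [Nat.card_Icc]; omega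
      calc ∑ t ∈ Finset.Icc (t₀+1) (t₀+k), ∑ j, l t j * z t j
          ≤ (Finset.Icc (t₀+1) (t₀+k)).card • (1:ℝ) := by
            apply Finset.sum_le_card_nsmul
            intro t htm
            have ht1 : 1 ≤ t := by have := (Finset.mem_Icc.mp htm).1; omega
            obtain ⟨hs, hlb⟩ := hinv t ht1
            calc ∑ j, l t j * z t j ≤ ∑ j, 1 * z t j := by
                  apply Finset.sum_le_sum
                  intro j _
                  exact mul_le_mul_of_nonneg_right (hl t j).2
                    (le_trans (by positivity) (hlb j))
            _ = 1 := by rw [Finset.sum_congr rfl fun j _ => one_mul (z t j), hs]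
      _ = (k:ℝ) := by rw [hcard, nsmul_eq_mul, mul_one]
    have hlil : 0 ≤ ∑ t ∈ Finset.Icc (t₀+1) (t₀+k), l t i :=
      Finset.sum_nonneg fun t _ => (hl t i).1
    have hτsq : τ ≤ Real.sqrt (16*D*τ*L) := by
      nth_rewrite 1 [show τ = Real.sqrt (τ^2) from (Real.sqrt_sq hτ0.le).symm]
      apply Real.sqrt_le_sqrt
      push_neg at hcase
      nlinarith
    rw [hSw0, mul_zero, add_zero]
    push_cast at hτsq ⊢
    linarith
  case pos =>
    have hstep := fun (t : ℕ) (ht : 1 ≤ t) =>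
      step_facts hN τ η hτ hη0.le (l t) (z t) (z (t+1)) (hl t) (hinv t ht).1
        (fun j => lt_of_lt_of_le (by positivity) ((hinv t ht).2 j))
        (fun j => by rw [hzrec t ht j, if_pos hcase])
    have hstepC : ∀ t, 1 ≤ t → ∀ j, η * (∑ j', l t j' * z t j') - η * l t j ≤
        Real.log (z (t+1) j) - Real.log (z t j) + η^2 + Real.exp η / τ :=
      fun t ht => (hstep t ht).2.2.1
    have hstepD : ∀ t, 1 ≤ t → tv (z (t+1)) (z t) ≤ Real.exp η * (η/2 + 1/τ) :=
      fun t ht => (hstep t ht).2.2.2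
    -- telescoping regret bound
    have claim1 : ∀ m : ℕ, 1 ≤ m →
        η * (∑ t ∈ Finset.Icc (t₀+1) (t₀+m), ((∑ j, l t j * z t j) - l t i)) ≤
        Real.log (z (t₀+m+1) i) - Real.log (z (t₀+1) i)
          + (m:ℝ)*(η^2 + Real.exp η/τ) := by
      intro m hm
      induction m, hm using Nat.le_induction with
      | base =>
        rw [Finset.Icc_self, Finset.sum_singleton]
        have hC := hstepC (t₀+1) (by omega) i
        have hexp : η * ((∑ j, l (t₀+1) j * z (t₀+1) j) - l (t₀+1) i)
            = η * (∑ j, l (t₀+1) j * z (t₀+1) j) - η * l (t₀+1) i := by ring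
        rw [hexp]
        push_cast
        linarith
      | succ m hm IH =>
        have e1 : t₀ + (m+1) = t₀ + m + 1 := rfl
        rw [e1, Finset.sum_Icc_succ_top (by omega : t₀ + 1 ≤ t₀ + m + 1)]
        have hC := hstepC (t₀+m+1) (by omega) i
        have hexp : η * ((∑ t ∈ Finset.Icc (t₀+1) (t₀+m), ((∑ j, l t j * z t j) - l t i))
              + ((∑ j, l (t₀+m+1) j * z (t₀+m+1) j) - l (t₀+m+1) i))
            = η * (∑ t ∈ Finset.Icc (t₀+1) (t₀+m), ((∑ j, l t j * z t j) - l t i))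
              + (η * (∑ j, l (t₀+m+1) j * z (t₀+m+1) j) - η * l (t₀+m+1) i) := by ring
        rw [hexp]
        push_cast
        linarith
    have hk' := claim1 k hk1
    obtain ⟨hsumK, hlbK⟩ := hinv (t₀+k+1) (by omega)
    have hzle1 : z (t₀+k+1) i ≤ 1 := by
      have h := Finset.single_le_sum (f := fun j => z (t₀+k+1) j)
        (fun j _ => le_trans (by positivity) (hlbK j)) (Finset.mem_univ i)
      rw [hsumK] at h
      exact h
    have hlogub : Real.log (z (t₀+k+1) i) ≤ 0 :=
      Real.log_nonpos (le_trans (by positivity) (hlbK i)) hzle1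
    have hloglb : -(Real.log 2 + L) ≤ Real.log (z (t₀+1) i) := by
      obtain ⟨_, hlb1⟩ := hinv (t₀+1) (by omega)
      have h1 : Real.log (1/(2*((N:ℝ)*τ))) ≤ Real.log (z (t₀+1) i) :=
        Real.log_le_log (by positivity) (hlb1 i)
      have h2 : Real.log (1/(2*((N:ℝ)*τ))) = -(Real.log 2 + L) := by
        rw [one_div, Real.log_inv, Real.log_mul (by norm_num) (by positivity), hLdef]
      linarith
    -- numeric facts
    have h32 : 32 * Real.log 2 ≤ (N:ℝ)*τ := by
      nlinarith [mul_nonneg (by linarith : (0:ℝ) ≤ (N:ℝ)-2) hτ0.le,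
        mul_nonneg (by linarith : (0:ℝ) ≤ D-1) hL0.le]
    have hL3 : (3:ℝ) ≤ L := by
      rw [hLdef]
      have hexp3 : Real.exp 3 < 20.09 := by
        have h1 : Real.exp 3 = (Real.exp 1)^(3:ℕ) := by
          rw [← Real.exp_nat_mul]; norm_num
        calc Real.exp 3 = (Real.exp 1)^(3:ℕ) := h1
        _ < 2.7182818286^(3:ℕ) := by
            exact pow_lt_pow_left₀ Real.exp_one_lt_d9 (Real.exp_pos 1).le (by norm_num)
        _ < 20.09 := by norm_num
      have hle : Real.exp 3 ≤ (N:ℝ)*τ := by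
        have hl2 := Real.log_two_gt_d9
        linarith
      exact (Real.le_log_iff_exp_le hNτ0).mpr hle
    have hη14 : η ≤ 1/4 := by
      have h1 : η^2*(D*(16*D*L)) ≤ η^2*(D*τ) :=
        mul_le_mul_of_nonneg_left (by nlinarith) (by positivity)
      have h2 : 16*(D*η)^2 ≤ 1 := by nlinarith [hL0]
      have h3 : 16*η^2 ≤ 1 := by
        nlinarith [mul_nonneg (by nlinarith : (0:ℝ) ≤ D^2 - 1) (sq_nonneg η)]
      nlinarith [h3, hη0]
    have hE13 : Real.exp η ≤ 1.3 := by
      have h1 : Real.exp η ≤ Real.exp (1/4) := Real.exp_le_exp.mpr hη14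
      have h2 : (Real.exp (1/4))^(4:ℕ) = Real.exp 1 := by
        rw [← Real.exp_nat_mul]; norm_num
      have h3 : Real.exp (1/4) ≤ 1.3 := by
        nlinarith [Real.exp_one_lt_d9, Real.exp_pos (1/4), h2,
          sq_nonneg (Real.exp (1/4) - 1.3), sq_nonneg (Real.exp (1/4) + 1.3),
          sq_nonneg ((Real.exp (1/4))^2 - 1.69)]
      linarith
    have hτη : 4*L ≤ τ*η := by
      have h1 : D*(τ*η)^2 = τ*L := by linear_combination τ * hη2
      have h2 : 16*D*L^2 ≤ D*(τ*η)^2 := by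
        rw [h1]; nlinarith [mul_le_mul_of_nonneg_left hcase hL0.le]
      have h3 : (4*L)^2 ≤ (τ*η)^2 := by nlinarith [hD0]
      nlinarith [hL0, mul_pos hτ0 hη0]
    have hτη12 : (12:ℝ) ≤ τ*η := by linarith
    -- switching cost bound
    have hB0 : 0 ≤ Real.exp η * (η/2 + 1/τ) :=
      mul_nonneg (Real.exp_pos η).le
        (add_nonneg (by linarith) (one_div_pos.mpr hτ0).le)
    have hSwB : ∑ t ∈ Finset.Icc (t₀+2) (t₀+k), tv (z t) (z (t-1))
        ≤ (k:ℝ) * (Real.exp η * (η/2 + 1/τ)) := by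
      calc ∑ t ∈ Finset.Icc (t₀+2) (t₀+k), tv (z t) (z (t-1))
          ≤ (Finset.Icc (t₀+2) (t₀+k)).card • (Real.exp η * (η/2 + 1/τ)) := by
            apply Finset.sum_le_card_nsmul
            intro t htm
            have ht2 : t₀ + 2 ≤ t := (Finset.mem_Icc.mp htm).1
            have e : t - 1 + 1 = t := by omega
            have hd := hstepD (t-1) (by omega)
            rw [e] at hd
            exact hd
      _ ≤ (k:ℝ) * (Real.exp η * (η/2 + 1/τ)) := by
            rw [nsmul_eq_mul]
            apply mul_le_mul_of_nonneg_right ?_ hB0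
            have hcard : (Finset.Icc (t₀+2) (t₀+k)).card ≤ k := by
              rw [Nat.card_Icc]; omega
            exact_mod_cast hcard
    have hSw0 : 0 ≤ ∑ t ∈ Finset.Icc (t₀+2) (t₀+k), tv (z t) (z (t-1)) :=
      Finset.sum_nonneg fun t _ => by simp only [tv]; positivity
    -- final assembly
    rw [hsqrt]
    have hRdef : (∑ t ∈ Finset.Icc (t₀+1) (t₀+k), ∑ j, l t j * z t j)
        - (∑ t ∈ Finset.Icc (t₀+1) (t₀+k), l t i)
        = ∑ t ∈ Finset.Icc (t₀+1) (t₀+k), ((∑ j, l t j * z t j) - l t i) :=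
      (Finset.sum_sub_distrib _ _).symm
    set R := ∑ t ∈ Finset.Icc (t₀+1) (t₀+k), ((∑ j, l t j * z t j) - l t i) with hR
    set Sw := ∑ t ∈ Finset.Icc (t₀+2) (t₀+k), tv (z t) (z (t-1)) with hSw
    have hlog27 : Real.log 2 ≤ 0.7 := by
      have := Real.log_two_lt_d9; linarith
    have hRbound : η * R ≤ Real.log 2 + L + (k:ℝ)*(η^2 + Real.exp η/τ) := by
      linarith [hk', hlogub, hloglb]
    have hsuff : R + D * Sw ≤ 4*(D*τ*η) :=
      final_numeric D τ η L R Sw (k:ℝ) (Real.exp η) (Real.log 2)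
        hD hτ hη0 hL3 hη2 (by exact_mod_cast hk1) hkτ (Real.exp_pos η) hE13 hτη12
        hlog2pos.le hlog27 hRbound hSwB hSw0
    linarith [hRdef, hsuff]
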